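/- Let ε > 0 and let F : (−ε,ε) → ℝ be a smooth function all of whose odd-order derivatives vanish at 0 (i.e., F^{(2k+1)}(0) = 0 for every k ≥ 0, so the Taylor series of F at 0 contains only even monomials). Then the function G : (−ε,ε) → ℝ defined by G(t) = F(|t|) is smooth, and G agrees with F on [0,ε). -/

import Mathlib

open Set Filter Asymptotics

/-- Podestà–Spiro symmetrization lemma: if `F` is smooth on `(−ε,ε)` and all of its
odd-order derivatives vanish at `0` (its Taylor series at `0` is even), then
`G(t) = F(|t|)` is smooth on `(−ε,ε)` and agrees with `F` on `[0,ε)`. -/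
theorem stmt_16
    (ε : ℝ) (hε : 0 < ε)
    (F : ℝ → ℝ)
    (hF : ContDiffOn ℝ (⊤ : ℕ∞) F (Set.Ioo (-ε) ε))
    (hodd : ∀ k : ℕ, iteratedDeriv (2 * k + 1) F 0 = 0) :
    ContDiffOn ℝ (⊤ : ℕ∞) (fun t => F |t|) (Set.Ioo (-ε) ε) ∧
    ∀ t ∈ Set.Ico (0 : ℝ) ε, F |t| = F t := by
  have hopen : IsOpen (Set.Ioo (-ε) ε) := isOpen_Ioo
  have h0 : (0 : ℝ) ∈ Set.Ioo (-ε) ε := ⟨by linarith, hε⟩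
  have hneg : ∀ t ∈ Set.Ioo (-ε) ε, -t ∈ Set.Ioo (-ε) ε :=
    fun t ht => ⟨by linarith [ht.2], by linarith [ht.1]⟩
  have hkey : ∀ m : ℕ, (-1 : ℝ) ^ m * iteratedDeriv m F 0 = iteratedDeriv m F 0 := by
    intro m
    rcases Nat.even_or_odd m with he | ⟨k, hk⟩
    · rw [he.neg_one_pow, one_mul]
    · subst hk; rw [hodd k, mul_zero]
  have hda : ∀ m : ℕ, ∀ t ∈ Set.Ioo (-ε) ε,
      HasDerivAt (iteratedDeriv m F) (iteratedDeriv (m + 1) F t) t := by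
    intro m t ht
    have hd := (hF.differentiableOn_iteratedDerivWithin (m := m)
      (by exact_mod_cast ENat.coe_lt_top m) hopen.uniqueDiffOn) t ht
    have hdA := (hd.differentiableAt (hopen.mem_nhds ht)).congr_of_eventuallyEq
      (Filter.eventuallyEq_of_mem (hopen.mem_nhds ht)
        (fun s hs => (iteratedDerivWithin_of_isOpen hopen hs).symm))
    rw [iteratedDeriv_succ]
    exact hdA.hasDerivAt
  have hdb : ∀ m : ℕ, ∀ t ∈ Set.Ioo (-ε) ε,
      HasDerivAt (fun s => (-1 : ℝ) ^ m * iteratedDeriv m F (-s))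
        ((-1 : ℝ) ^ (m + 1) * iteratedDeriv (m + 1) F (-t)) t := by
    intro m t ht
    have := ((hda m (-t) (hneg t ht)).comp t (hasDerivAt_neg' t)).const_mul ((-1 : ℝ) ^ m)
    rw [show (-1 : ℝ) ^ (m + 1) * iteratedDeriv (m + 1) F (-t) =
      (-1 : ℝ) ^ m * (iteratedDeriv (m + 1) F (-t) * -1) by ring]
    exact this
  set G : ℕ → ℝ → ℝ := fun m t =>
    if 0 ≤ t then iteratedDeriv m F t else (-1 : ℝ) ^ m * iteratedDeriv m F (-t) with hGdef
  have hG : ∀ m : ℕ, ∀ t ∈ Set.Ioo (-ε) ε, HasDerivAt (G m) (G (m + 1) t) t := by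
    intro m t ht
    rcases lt_trichotomy t 0 with h | h | h
    · have e : G m =ᶠ[nhds t] fun s => (-1 : ℝ) ^ m * iteratedDeriv m F (-s) := by
        filter_upwards [Iio_mem_nhds h] with s hs
        simp only [G, if_neg (not_le.2 (show s < 0 from hs))]
      have : G (m + 1) t = (-1 : ℝ) ^ (m + 1) * iteratedDeriv (m + 1) F (-t) := by
        simp only [G, if_neg (not_le.2 h)]
      rw [this]
      exact (hdb m t ht).congr_of_eventuallyEq e
    · subst h
      have hr : HasDerivWithinAt (G m) (G (m + 1) 0) (Ici 0) 0 := by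
        rw [show G (m + 1) 0 = iteratedDeriv (m + 1) F 0 by simp [G]]
        exact ((hda m 0 h0).hasDerivWithinAt (s := Ici 0)).congr
          (fun s hs => by simp [G, show (0 : ℝ) ≤ s from hs]) (by simp [G])
      have hl : HasDerivWithinAt (G m) (G (m + 1) 0) (Iic 0) 0 := by
        rw [show G (m + 1) 0 = (-1 : ℝ) ^ (m + 1) * iteratedDeriv (m + 1) F (-0) by
          simp only [G, le_refl, if_true, neg_zero]; exact (hkey (m + 1)).symm]
        refine ((hdb m 0 h0).hasDerivWithinAt (s := Iic 0)).congr (fun s hs => ?_) ?_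
        · rcases (show s ≤ 0 from hs).lt_or_eq with hs' | hs'
          · simp only [G, if_neg (not_le.2 hs')]
          · subst hs'
            simp only [G, le_refl, if_true, neg_zero]; exact (hkey m).symm
        · simp only [G, le_refl, if_true, neg_zero]; exact (hkey m).symm
      have := hl.union hr
      rw [Iic_union_Ici] at this
      exact hasDerivWithinAt_univ.1 this
    · have e : G m =ᶠ[nhds t] iteratedDeriv m F := by
        filter_upwards [Ioi_mem_nhds h] with s hs
        simp only [G, if_pos (le_of_lt (show 0 < s from hs))]
      have : G (m + 1) t = iteratedDeriv (m + 1) F t := by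
        simp only [G, if_pos h.le]
      rw [this]
      exact (hda m t ht).congr_of_eventuallyEq e
  have hcd : ∀ n : ℕ, ∀ m : ℕ, ContDiffOn ℝ n (G m) (Set.Ioo (-ε) ε) := by
    intro n
    induction n with
    | zero =>
      intro m
      exact contDiffOn_zero.2 (fun t ht => (hG m t ht).continuousAt.continuousWithinAt)
    | succ n ih =>
      intro m
      have hc : ((n + 1 : ℕ) : WithTop ℕ∞) = (n : WithTop ℕ∞) + 1 := by push_cast; rfl
      rw [hc, contDiffOn_succ_iff_deriv_of_isOpen hopen]
      refine ⟨fun t ht => (hG m t ht).differentiableAt.differentiableWithinAt,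
        by simp, ?_⟩
      exact (ih (m + 1)).congr (fun t ht => (hG m t ht).deriv)
  refine ⟨contDiffOn_infty.2 (fun n => (hcd n 0).congr ?_), fun t ht => ?_⟩
  · intro t ht
    simp only [G, iteratedDeriv_zero, pow_zero, one_mul]
    split_ifs with h
    · rw [abs_of_nonneg h]
    · rw [abs_of_neg (not_le.1 h)]
  rw [abs_of_nonneg ht.1]
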